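/- arXiv:0805.1762 — 3 statements merged into one kernel-verified Lean document; each statement's English description precedes it below -/
import Mathlib

section
/- Let G be a finite simple graph with base vertex v₀, and let u, v be vertices of G joined by a path in G. If q and q' are monomials in the variables q_A with φ_G(q) = φ_G(q'), then h_{u,v}(q) ≡ h_{u,v}(q') (mod 2). -/
open MvPolynomial

noncomputable section

/-- `sep A e` is `true` iff the edge `e` has exactly one endpoint in `A`. -/
def sep {V : Type} [DecidableEq V] (A : Finset V) : Sym2 V → Bool :=
  Sym2.lift ⟨fun a b => (decide (a ∈ A)).xor (decide (b ∈ A)),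
    fun _ _ => Bool.xor_comm _ _⟩

/-- The cut map `φ_G : K[q_A : v₀ ∈ A ⊆ V] → K[s_e, t_e : e ∈ E]`, where
`s_e` is the variable `X (e, true)` and `t_e` is the variable `X (e, false)`. -/
def cutMap (K : Type) [Field K] {V : Type} [Fintype V] [DecidableEq V]
    (G : SimpleGraph V) (v₀ : V) :
    MvPolynomial {A : Finset V // v₀ ∈ A} K →ₐ[K] MvPolynomial (Sym2 V × Bool) K :=
  aeval fun A : {A : Finset V // v₀ ∈ A} =>
    ∏ e ∈ (Set.toFinite G.edgeSet).toFinset, X (e, sep A.1 e)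

/-- The monomial `q_{A₁} ⋯ q_{Aₙ}` associated to a multiset of cut index sets. -/
def mon (K : Type) [Field K] {V : Type} {v₀ : V}
    (m : Multiset {A : Finset V // v₀ ∈ A}) :
    MvPolynomial {A : Finset V // v₀ ∈ A} K :=
  (m.map X).prod

/-- The height `h_{u,v}` of a monomial `q_{A₁} ⋯ q_{Aₙ}`: the number of `i` such that
exactly one of `u`, `v` belongs to `Aᵢ`. -/
def height {V : Type} [DecidableEq V] (u v : V) {v₀ : V}
    (m : Multiset {A : Finset V // v₀ ∈ A}) : ℕ :=
  Multiset.card (m.filter fun A => sep A.1 s(u, v) = true)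

/-! On an edge `uv` of `G`, `h_{u,v}(q)` is the exponent of `s_{uv}` in the monomial `φ_G(q)`, so
`φ_G(q) = φ_G(q')` gives `h_{u,v}(q) = h_{u,v}(q')` for adjacent `u, v`. Modulo 2,
`h_{u,v}(q) ≡ n_u(q) + n_v(q)`, where `n_w(q)` is the number of `Aᵢ` containing `w`
(`memParity`). Hence `w ↦ n_w(q) + n_w(q')` is constant mod 2 along edges, so along the path
from `u` to `v`, and that is the claim. -/

theorem SimpleGraph.Reachable.apply_eq_of_adj {V α : Type*} {G : SimpleGraph V} {f : V → α}
    (hf : ∀ a b, G.Adj a b → f a = f b) {u v : V} (h : G.Reachable u v) : f u = f v := by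
  obtain ⟨p⟩ := h
  induction p with
  | nil => rfl
  | cons hab _ ih => exact (hf _ _ hab).trans ih

section

variable {V : Type} [DecidableEq V]

lemma sep_mk (A : Finset V) (a b : V) :
    sep A s(a, b) = (decide (a ∈ A)).xor (decide (b ∈ A)) := rfl

lemma sep_toNat_cast (A : Finset V) (u v : V) :
    ((sep A s(u, v)).toNat : ZMod 2) = (if u ∈ A then 1 else 0) + (if v ∈ A then 1 else 0) := by
  by_cases hu : u ∈ A <;> by_cases hv : v ∈ A <;>
    simp [sep_mk, hu, hv, CharTwo.add_self_eq_zero]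

variable {v₀ : V}

lemma height_cons (u v : V) (A : {A : Finset V // v₀ ∈ A})
    (m : Multiset {A : Finset V // v₀ ∈ A}) :
    height u v (A ::ₘ m) = (sep A.1 s(u, v)).toNat + height u v m := by
  unfold height
  cases h : sep A.1 s(u, v) <;> simp only [Multiset.filter_cons, h] <;> simp [add_comm]

def memParity (m : Multiset {A : Finset V // v₀ ∈ A}) (w : V) : ZMod 2 :=
  m.countP (w ∈ ·.1)

lemma height_cast_eq_memParity_add (u v : V) (m : Multiset {A : Finset V // v₀ ∈ A}) :
    (height u v m : ZMod 2) = memParity m u + memParity m v := by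
  induction m using Multiset.induction with
  | empty => simp [height, memParity]
  | cons A m ih =>
    simp only [memParity] at ih ⊢
    rw [height_cons, Multiset.countP_cons, Multiset.countP_cons]
    push_cast
    rw [ih, sep_toNat_cast]
    ring

lemma height_modEq_two_iff (u v : V) (m m' : Multiset {A : Finset V // v₀ ∈ A}) :
    height u v m ≡ height u v m' [MOD 2] ↔
      memParity m u + memParity m' u = memParity m v + memParity m' v := by
  rw [← ZMod.natCast_eq_natCast_iff, height_cast_eq_memParity_add, height_cast_eq_memParity_add]
  grind

end

section

variable {V : Type} [Fintype V] [DecidableEq V]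

def cutExponent (G : SimpleGraph V) (A : Finset V) : Sym2 V × Bool →₀ ℕ :=
  ∑ e ∈ (Set.toFinite G.edgeSet).toFinset, Finsupp.single (e, sep A e) 1

lemma cutExponent_apply_true (G : SimpleGraph V) (A : Finset V) {e : Sym2 V}
    (he : e ∈ G.edgeSet) : cutExponent G A (e, true) = (sep A e).toNat := by
  rw [cutExponent, Finsupp.finsetSum_apply, Finset.sum_eq_single e]
  · cases sep A e <;> simp
  · intro e' _ hne
    simp [hne]
  · simp [he]

variable (K : Type) [Field K] (G : SimpleGraph V) (v₀ : V)

lemma cutMap_X (A : {A : Finset V // v₀ ∈ A}) :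
    cutMap K G v₀ (X A) = monomial (cutExponent G A.1) 1 := by
  rw [cutMap, aeval_X, cutExponent, monomial_sum_one]
  rfl

lemma cutMap_mon (m : Multiset {A : Finset V // v₀ ∈ A}) :
    cutMap K G v₀ (mon K m) = monomial (m.map fun A => cutExponent G A.1).sum 1 := by
  induction m using Multiset.induction with
  | empty => simp [mon]
  | cons A m ih =>
    rw [mon, Multiset.map_cons, Multiset.prod_cons, map_mul, ← mon, ih, cutMap_X,
      monomial_mul, one_mul, Multiset.map_cons, Multiset.sum_cons]

variable {G} {v₀}

lemma sum_cutExponent_apply_of_adj {u v : V} (huv : G.Adj u v)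
    (m : Multiset {A : Finset V // v₀ ∈ A}) :
    (m.map fun A => cutExponent G A.1).sum (s(u, v), true) = height u v m := by
  induction m using Multiset.induction with
  | empty => simp [height]
  | cons A m ih =>
    rw [Multiset.map_cons, Multiset.sum_cons, Finsupp.add_apply, ih, height_cons,
      cutExponent_apply_true G A.1 huv]

lemma height_eq_of_cutMap_eq {u v : V} (huv : G.Adj u v)
    {m m' : Multiset {A : Finset V // v₀ ∈ A}}
    (heq : cutMap K G v₀ (mon K m) = cutMap K G v₀ (mon K m')) :
    height u v m = height u v m' := by
  rw [cutMap_mon, cutMap_mon] at heq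
  rw [← sum_cutExponent_apply_of_adj huv, ← sum_cutExponent_apply_of_adj huv,
    monomial_left_injective one_ne_zero heq]

end

/-- Lemma 2.4: if there is a path from `u` to `v` in `G` and `q`, `q'` are monomials with
`φ_G(q) = φ_G(q')`, then `h_{u,v}(q) ≡ h_{u,v}(q')` mod `2`. -/
theorem height_congr_of_cutMap_eq
    (K : Type) [Field K] {V : Type} [Fintype V] [DecidableEq V]
    (G : SimpleGraph V) (v₀ : V) (u v : V) (hpath : G.Reachable u v)
    (m m' : Multiset {A : Finset V // v₀ ∈ A})
    (heq : cutMap K G v₀ (mon K m) = cutMap K G v₀ (mon K m')) :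
    height u v m ≡ height u v m' [MOD 2] := by
  rw [height_modEq_two_iff]
  refine hpath.apply_eq_of_adj (f := fun w => memParity m w + memParity m' w) fun a b hab => ?_
  rw [← height_modEq_two_iff, height_eq_of_cutMap_eq K hab heq]

end
end

section
/- Let G be a finite simple graph with two distinct non-adjacent vertices u, v and subsets L, R ⊆ V(G) with L ∪ R = V(G), L ∩ R = {u, v}, such that every edge of G has both endpoints in L or both endpoints in R; index cuts of G by subsets containing the base vertex u. Let A₁ and A₂ be cut index sets of G with v ∈ A₁ if and only if v ∈ A₂, and set A₁' = (A₁ ∩ L) ∪ (A₂ ∩ R) and A₂' = (A₂ ∩ L) ∪ (A₁ ∩ R). Then the quadratic binomial q_{A₁}q_{A₂} − q_{A₁'}q_{A₂'} belongs to the cut ideal I_G. -/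
open MvPolynomial

noncomputable section

/-- The cut ideal `I_G`, i.e. the kernel of `φ_G`. -/
def cutIdeal (K : Type) [Field K] {V : Type} [Fintype V] [DecidableEq V]
    (G : SimpleGraph V) (v₀ : V) :
    Ideal (MvPolynomial {A : Finset V // v₀ ∈ A} K) :=
  RingHom.ker (cutMap K G v₀)

/-!
The cut map sends `q_A` to a product over the edges `e` of variables indexed by `(e, sep A e)`,
so `q_{A₁} q_{A₂}` and `q_{B₁} q_{B₂}` have the same image as soon as, edge by edge, the pair
`(sep B₁ e, sep B₂ e)` is `(sep A₁ e, sep A₂ e)` up to order. An edge inside `L` sees `A₁'` as `A₁`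
and `A₂'` as `A₂`, an edge inside `R` sees them as `A₂` and `A₁`; this needs `A₁` and `A₂` to agree
on the separator `L ∩ R = {u, v}`, which holds since both contain `u` and agree on `v`.
-/

section Sep

variable {V : Type} [DecidableEq V]

theorem sep_congr {B C : Finset V} {e : Sym2 V} (h : ∀ x ∈ e, x ∈ B ↔ x ∈ C) :
    sep B e = sep C e := by
  induction e using Sym2.ind with
  | _ a b =>
    simp only [sep, Sym2.lift_mk]
    rw [decide_eq_decide.mpr (h a (Sym2.mem_mk_left a b)),
      decide_eq_decide.mpr (h b (Sym2.mem_mk_right a b))]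

variable {L R B C : Finset V} (hBC : ∀ a ∈ L ∩ R, a ∈ B ↔ a ∈ C)
include hBC

theorem sep_inter_union_inter_of_subset_left {e : Sym2 V} (he : ∀ x ∈ e, x ∈ L) :
    sep (B ∩ L ∪ C ∩ R) e = sep B e := by
  refine sep_congr fun a ha => ?_
  have haL := he a ha
  simp only [Finset.mem_union, Finset.mem_inter]
  exact ⟨fun h => h.elim And.left fun h => (hBC a (Finset.mem_inter.2 ⟨haL, h.2⟩)).2 h.1,
    fun h => Or.inl ⟨h, haL⟩⟩

theorem sep_inter_union_inter_of_subset_right {e : Sym2 V} (he : ∀ x ∈ e, x ∈ R) :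
    sep (B ∩ L ∪ C ∩ R) e = sep C e := by
  refine sep_congr fun a ha => ?_
  have haR := he a ha
  simp only [Finset.mem_union, Finset.mem_inter]
  exact ⟨fun h => h.elim (fun h => (hBC a (Finset.mem_inter.2 ⟨h.2, haR⟩)).1 h.1) And.left,
    fun h => Or.inr ⟨h, haR⟩⟩

end Sep

theorem mul_X_sub_mul_X_mem_cutIdeal (K : Type) [Field K] {V : Type} [Fintype V]
    [DecidableEq V] (G : SimpleGraph V) (v₀ : V) {A₁ A₂ B₁ B₂ : {A : Finset V // v₀ ∈ A}}
    (h : ∀ e ∈ G.edgeSet, (sep A₁.1 e = sep B₁.1 e ∧ sep A₂.1 e = sep B₂.1 e) ∨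
      (sep A₁.1 e = sep B₂.1 e ∧ sep A₂.1 e = sep B₁.1 e)) :
    X A₁ * X A₂ - X B₁ * X B₂ ∈ cutIdeal K G v₀ := by
  rw [cutIdeal, RingHom.mem_ker, map_sub, sub_eq_zero, map_mul, map_mul]
  simp only [cutMap, aeval_X, ← Finset.prod_mul_distrib]
  refine Finset.prod_congr rfl fun e he => ?_
  rcases h e ((Set.Finite.mem_toFinset _).1 he) with ⟨h₁, h₂⟩ | ⟨h₁, h₂⟩
  · rw [h₁, h₂]
  · rw [h₁, h₂, mul_comm]

theorem sorting_binomial_mem_cutIdeal_general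
    (K : Type) [Field K] {V : Type} [Fintype V] [DecidableEq V]
    (G : SimpleGraph V) (u v : V)
    (L R : Finset V) (hI : L ∩ R = {u, v})
    (huL : u ∈ L)
    (hE : ∀ a b, G.Adj a b → (a ∈ L ∧ b ∈ L) ∨ (a ∈ R ∧ b ∈ R))
    (A₁ A₂ : {A : Finset V // u ∈ A}) (hv : v ∈ A₁.1 ↔ v ∈ A₂.1) :
    X A₁ * X A₂ -
      X (⟨(A₁.1 ∩ L) ∪ (A₂.1 ∩ R),
            Finset.mem_union_left _ (Finset.mem_inter_of_mem A₁.2 huL)⟩ :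
          {A : Finset V // u ∈ A}) *
      X (⟨(A₂.1 ∩ L) ∪ (A₁.1 ∩ R),
            Finset.mem_union_left _ (Finset.mem_inter_of_mem A₂.2 huL)⟩ :
          {A : Finset V // u ∈ A}) ∈
      cutIdeal K G u := by
  have hA : ∀ a ∈ L ∩ R, a ∈ A₁.1 ↔ a ∈ A₂.1 := by
    intro a ha
    rw [hI, Finset.mem_insert, Finset.mem_singleton] at ha
    rcases ha with rfl | rfl
    · exact iff_of_true A₁.2 A₂.2
    · exact hv
  have hA' : ∀ a ∈ L ∩ R, a ∈ A₂.1 ↔ a ∈ A₁.1 := fun a ha => (hA a ha).symm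
  refine mul_X_sub_mul_X_mem_cutIdeal K G u fun e he => ?_
  induction e using Sym2.ind with
  | _ a b =>
    rcases hE a b he with ⟨haL, hbL⟩ | ⟨haR, hbR⟩
    · have hab : ∀ x ∈ s(a, b), x ∈ L := by simp [haL, hbL]
      exact .inl ⟨(sep_inter_union_inter_of_subset_left hA hab).symm,
        (sep_inter_union_inter_of_subset_left hA' hab).symm⟩
    · have hab : ∀ x ∈ s(a, b), x ∈ R := by simp [haR, hbR]
      exact .inr ⟨(sep_inter_union_inter_of_subset_right hA' hab).symm,
        (sep_inter_union_inter_of_subset_right hA hab).symm⟩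

/-- If `G` decomposes over `{u, v}` into a left part `L` and a right part `R`, and the
cut index sets `A₁`, `A₂` (containing the base vertex `u`) agree on whether they contain
`v`, then the quadratic sorting binomial
`q_{A₁} q_{A₂} - q_{(A₁∩L)∪(A₂∩R)} q_{(A₂∩L)∪(A₁∩R)}` lies in the cut ideal `I_G`. -/
theorem sorting_binomial_mem_cutIdeal
    (K : Type) [Field K] {V : Type} [Fintype V] [DecidableEq V]
    (G : SimpleGraph V) (u v : V) (huv : u ≠ v) (hadj : ¬ G.Adj u v)
    (L R : Finset V) (hLR : L ∪ R = Finset.univ) (hI : L ∩ R = {u, v})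
    (huL : u ∈ L) (huR : u ∈ R)
    (hE : ∀ a b, G.Adj a b → (a ∈ L ∧ b ∈ L) ∨ (a ∈ R ∧ b ∈ R))
    (A₁ A₂ : {A : Finset V // u ∈ A}) (hv : v ∈ A₁.1 ↔ v ∈ A₂.1) :
    X A₁ * X A₂ -
      X (⟨(A₁.1 ∩ L) ∪ (A₂.1 ∩ R),
            Finset.mem_union_left _ (Finset.mem_inter_of_mem A₁.2 huL)⟩ :
          {A : Finset V // u ∈ A}) *
      X (⟨(A₂.1 ∩ L) ∪ (A₁.1 ∩ R),
            Finset.mem_union_left _ (Finset.mem_inter_of_mem A₂.2 huL)⟩ :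
          {A : Finset V // u ∈ A}) ∈
      cutIdeal K G u :=
  sorting_binomial_mem_cutIdeal_general K G u v L R hI huL hE A₁ A₂ hv

end
end

section
/- Let P₄ be the path graph with vertex set {1, 2, 3, 4} and edges {1,2}, {2,3}, {3,4}. Then the cut ideal I_{P₄} is generated by polynomials of degree at most 2. -/
open MvPolynomial

noncomputable section

/-- The path graph `P₄` on vertices `0 - 1 - 2 - 3` (standing for `1 - 2 - 3 - 4`). -/
def P4 : SimpleGraph (Fin 4) := SimpleGraph.fromEdgeSet {s(0, 1), s(1, 2), s(2, 3)}

/-!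
Since `P₄` is a tree, a cut `A ∋ v₀` is determined by its set `S ⊆ {1, 2, 3}` of cut edges, and
every `S` occurs; so up to renaming variables `φ_{P₄}` is the Segre map
`q_S ↦ ∏_{i ∈ S} s_i ∏_{i ∉ S} t_i` of `(ℙ¹)³`. Its kernel is generated by the quadrics
`q_S q_T - q_{S ∩ T} q_{S ∪ T}`: modulo these, every monomial can be rewritten into one supported
on a chain `S₀ ⊆ ⋯ ⊆ S_{N-1}` (replacing an incomparable pair `S, T` by `S ∩ T, S ∪ T` strictly
increases the bounded quantity `∑ |Sⱼ|²`), and a chain monomial is determined by its image, since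
`Sⱼ` consists of the `i` lying in at least `N - j` of the sets. Hence a polynomial in the kernel
reduces to zero.
-/

open Finsupp (single)

lemma X_mul_X_eq_monomial {σ R : Type*} [CommSemiring R] (a b : σ) :
    (X a * X b : MvPolynomial σ R) = monomial (single a 1 + single b 1) 1 := by
  rw [X, X, monomial_mul, one_mul]

lemma card_inter_lt_card_left {α : Type*} [DecidableEq α] {u v : Finset α} (huv : ¬ u ⊆ v) :
    (u ∩ v).card < u.card :=
  Finset.card_lt_card <| Finset.ssubset_iff_subset_ne.2
    ⟨Finset.inter_subset_left, fun h => huv (Finset.inter_eq_left.1 h)⟩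

lemma sq_add_sq_lt_sq_add_sq {a b p q : ℕ} (hp : a < p) (hq : a < q) (h : a + b = p + q) :
    p ^ 2 + q ^ 2 < a ^ 2 + b ^ 2 := by
  obtain ⟨s, rfl⟩ := Nat.exists_eq_add_of_lt hp
  obtain ⟨t, rfl⟩ := Nat.exists_eq_add_of_lt hq
  obtain rfl : b = a + s + t + 2 := by omega
  nlinarith

lemma comap_rename_span {σ τ R : Type*} [CommRing R] (e : σ ≃ τ) (S : Set (MvPolynomial τ R)) :
    Ideal.comap (rename e) (Ideal.span S) = Ideal.span (rename e.symm '' S) := by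
  rw [← Ideal.map_span]
  exact (Ideal.map_comap_of_equiv (renameEquiv R e.symm).toRingEquiv).symm

namespace Segre

section

variable {ι : Type*} [Fintype ι]

def sumCardSq : (Finset ι →₀ ℕ) →ₗ[ℕ] ℕ := Finsupp.linearCombination ℕ fun u => u.card ^ 2

lemma sumCardSq_le (d : Finset ι →₀ ℕ) : sumCardSq d ≤ Fintype.card ι ^ 2 * d.degree := by
  induction d using Finsupp.induction_linear with
  | zero => simp
  | add d e hd he => simp only [map_add, mul_add]; omega
  | single u k =>
    simp only [sumCardSq, Finsupp.linearCombination_single, smul_eq_mul, Finsupp.degree_single]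
    rw [mul_comm]
    gcongr
    exact Finset.card_le_univ u

end

variable {ι : Type*} [DecidableEq ι]

variable (ι) in
def segreQuadrics (K : Type*) [CommRing K] : Set (MvPolynomial (Finset ι) K) :=
  {q | ∃ u v : Finset ι, X u * X v - X (u ∩ v) * X (u ∪ v) = q}

lemma isHomogeneous_of_mem_segreQuadrics {K : Type*} [CommRing K] {q : MvPolynomial (Finset ι) K}
    (hq : q ∈ segreQuadrics ι K) : q.IsHomogeneous 2 := by
  obtain ⟨u, v, rfl⟩ := hq
  exact ((isHomogeneous_X K u).mul (isHomogeneous_X K v)).sub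
    ((isHomogeneous_X K _).mul (isHomogeneous_X K _))

variable [Fintype ι]

def segreExp : (Finset ι →₀ ℕ) →ₗ[ℕ] (ι × Bool →₀ ℕ) :=
  Finsupp.linearCombination ℕ fun u => ∑ i, single (i, decide (i ∈ u)) 1

lemma segreExp_single (u : Finset ι) (k : ℕ) :
    segreExp (single u k) = k • ∑ i, single (i, decide (i ∈ u)) 1 := by
  simp [segreExp]

lemma segreExp_single_apply (u : Finset ι) (k : ℕ) (i : ι) (b : Bool) :
    segreExp (single u k) (i, b) = if decide (i ∈ u) = b then k else 0 := by
  rw [segreExp_single, Finsupp.smul_apply, Finsupp.finsetSum_apply, Finset.sum_eq_single i]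
  · split_ifs <;> simp [*]
  · intro j _ hj
    simp [hj]
  · simp

lemma segreExp_apply (d : Finset ι →₀ ℕ) (i : ι) (b : Bool) :
    segreExp d (i, b) = ∑ u ∈ d.support, if decide (i ∈ u) = b then d u else 0 := by
  conv_lhs => rw [← d.sum_single, Finsupp.sum, map_sum]
  simp only [Finsupp.finsetSum_apply, segreExp_single_apply]

lemma segreExp_apply_true_add_apply_false (d : Finset ι →₀ ℕ) (i : ι) :
    segreExp d (i, true) + segreExp d (i, false) = d.degree := by
  induction d using Finsupp.induction_linear with
  | zero => simp
  | add d e hd he => simp only [map_add, Finsupp.add_apply]; omega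
  | single u k => by_cases hi : i ∈ u <;> simp [segreExp_single_apply, hi]

lemma segreExp_inter_add_union (u v : Finset ι) :
    segreExp (single (u ∩ v) 1) + segreExp (single (u ∪ v) 1) =
      segreExp (single u 1) + segreExp (single v 1) := by
  ext ⟨i, b⟩
  simp only [ Finsupp.add_apply, segreExp_single_apply, Finset.mem_inter, Finset.mem_union]
  by_cases hu : i ∈ u <;> by_cases hv : i ∈ v <;> cases b <;> simp [hu, hv]

/-- The multichain of length `N` whose image under the Segre map has exponent `E`, when one
exists. -/
def chainOfExp (E : ι × Bool →₀ ℕ) (N : ℕ) : Finset ι →₀ ℕ :=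
  ∑ k ∈ Finset.range N, single (Finset.univ.filter fun i => N ≤ k + E (i, true)) 1

lemma chainOfExp_add_segreExp_single (E : ι × Bool →₀ ℕ) (N : ℕ) (m : Finset ι)
    (hE : ∀ i ∉ m, E (i, true) = 0) :
    chainOfExp (E + segreExp (single m 1)) (N + 1) = chainOfExp E N + single m (1 : ℕ) := by
  rw [chainOfExp, chainOfExp, Finset.sum_range_succ]
  congr 1
  · refine Finset.sum_congr rfl fun k hk => ?_
    have hk : k < N := Finset.mem_range.1 hk
    congr 2
    ext i
    by_cases hi : i ∈ m <;> simp [segreExp_single_apply, hi, hE] <;> omega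
  · congr 1
    ext i
    by_cases hi : i ∈ m <;> simp [segreExp_single_apply, hi, hE]

theorem chainOfExp_segreExp (d : Finset ι →₀ ℕ)
    (hd : IsChain (· ⊆ ·) (d.support : Set (Finset ι))) :
    chainOfExp (segreExp d) d.degree = d := by
  induction hn : d.degree generalizing d with
  | zero => simp_all [chainOfExp, Finsupp.degree_eq_zero_iff]
  | succ n ih =>
    have hne : d.support.Nonempty := by
      rw [Finsupp.support_nonempty_iff]
      rintro rfl
      simp at hn
    obtain ⟨m, hm_mem, hm_max⟩ := d.support.exists_maximal hne
    have hm_top : ∀ u ∈ d.support, u ⊆ m := fun u hu =>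
      (hd.total hu hm_mem).elim id (hm_max hu)
    have hle : single m 1 ≤ d :=
      Finsupp.single_le_iff.2 (Nat.one_le_iff_ne_zero.2 (Finsupp.mem_support_iff.1 hm_mem))
    set e := d - single m 1
    have hde : d = e + single m 1 := (tsub_add_cancel_of_le hle).symm
    have he_supp : e.support ⊆ d.support := Finsupp.support_tsub
    have he_deg : e.degree = n := by
      rw [hde, map_add, Finsupp.degree_single] at hn
      omega
    have he_top : ∀ i ∉ m, segreExp e (i, true) = 0 := by
      intro i hi
      rw [segreExp_apply]
      refine Finset.sum_eq_zero fun u hu => ?_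
      have : i ∉ u := fun h => hi (hm_top u (he_supp hu) h)
      simp [this]
    calc chainOfExp (segreExp d) (n + 1)
        = chainOfExp (segreExp e + segreExp (single m 1)) (n + 1) := by
          conv_lhs => rw [hde, map_add]
      _ = chainOfExp (segreExp e) n + single m 1 :=
          chainOfExp_add_segreExp_single _ _ _ he_top
      _ = d := by rw [ih e (hd.mono he_supp) he_deg, ← hde]

variable (K : Type*) [CommRing K]

variable (ι) in
def segreMap : MvPolynomial (Finset ι) K →ₐ[K] MvPolynomial (ι × Bool) K :=
  aeval fun u => ∏ i, X (i, decide (i ∈ u))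

lemma segreMap_monomial (d : Finset ι →₀ ℕ) (c : K) :
    segreMap ι K (monomial d c) = monomial (segreExp d) c := by
  have hX (u : Finset ι) : (∏ i, X (i, decide (i ∈ u)) : MvPolynomial (ι × Bool) K) =
      monomial (∑ i, single (i, decide (i ∈ u)) 1) 1 := by
    simp [monomial_sum_one, X]
  rw [segreMap, aeval_monomial, algebraMap_eq, segreExp, Finsupp.linearCombination_apply,
    monomial_finsupp_sum_index]
  simp only [hX, monomial_pow, one_pow]

lemma segreMap_eq_mapDomain (p : MvPolynomial (Finset ι) K) :
    segreMap ι K p = AddMonoidAlgebra.mapDomainLinearMap K K segreExp p := by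
  induction p using MvPolynomial.induction_on' with
  | monomial d c =>
    rw [segreMap_monomial, ← single_eq_monomial, ← single_eq_monomial,
      AddMonoidAlgebra.mapDomainLinearMap_single]
  | add p q hp hq => rw [map_add, map_add, hp, hq]

lemma exists_swap_of_not_isChain (d : Finset ι →₀ ℕ)
    (hd : ¬ IsChain (· ⊆ ·) (d.support : Set (Finset ι))) :
    ∃ d', segreExp d' = segreExp d ∧ d'.degree = d.degree ∧ sumCardSq d < sumCardSq d' ∧
      monomial d (1 : K) - monomial d' 1 ∈ Ideal.span (segreQuadrics ι K) := by
  simp only [IsChain, Set.Pairwise, Finset.mem_coe, not_forall, not_or] at hd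
  obtain ⟨u, hu, v, hv, -, huv, hvu⟩ := hd
  rw [Finsupp.mem_support_iff] at hu hv
  set e := d - single u 1 - single v 1
  have hde : d = e + (single u 1 + single v 1) := by
    ext x
    simp only [e, Finsupp.add_apply, Finsupp.tsub_apply, Finsupp.single_apply]
    split_ifs <;> simp_all <;> omega
  refine ⟨e + (single (u ∩ v) 1 + single (u ∪ v) 1), ?_, ?_, ?_, ?_⟩
  · simp only [hde, map_add, segreExp_inter_add_union]
  · simp [hde, Finsupp.degree_single]
  · have hlt := sq_add_sq_lt_sq_add_sq (card_inter_lt_card_left huv)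
      (Finset.inter_comm v u ▸ card_inter_lt_card_left hvu) (Finset.card_inter_add_card_union u v)
    simp only [hde, map_add, sumCardSq, Finsupp.linearCombination_single, smul_eq_mul, one_mul]
    omega
  · have hfac (s : Finset ι →₀ ℕ) : monomial (e + s) (1 : K) = monomial e 1 * monomial s 1 := by
      rw [monomial_mul, one_mul]
    rw [hde, hfac, hfac, ← mul_sub, ← X_mul_X_eq_monomial, ← X_mul_X_eq_monomial]
    exact Ideal.mul_mem_left _ _ (Ideal.subset_span ⟨u, v, rfl⟩)

theorem monomial_sub_monomial_chainOfExp_mem_span (d : Finset ι →₀ ℕ) :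
    monomial d (1 : K) - monomial (chainOfExp (segreExp d) d.degree) 1 ∈
      Ideal.span (segreQuadrics ι K) := by
  by_cases hd : IsChain (· ⊆ ·) (d.support : Set (Finset ι))
  · rw [chainOfExp_segreExp d hd, sub_self]
    exact Ideal.zero_mem _
  · obtain ⟨d', hexp, hdeg, hlt, hmem⟩ := exists_swap_of_not_isChain K d hd
    have hd' := monomial_sub_monomial_chainOfExp_mem_span d'
    rw [hexp, hdeg] at hd'
    rw [← sub_add_sub_cancel _ (monomial d' 1)]
    exact Ideal.add_mem _ hmem hd'
termination_by Fintype.card ι ^ 2 * d.degree - sumCardSq d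
decreasing_by
  have hbound := sumCardSq_le d'
  rw [hdeg] at hbound ⊢
  exact Nat.sub_lt_sub_left (hlt.trans_le hbound) hlt

lemma sub_mapDomain_chainOfExp_mem_span (p : MvPolynomial (Finset ι) K) :
    p - AddMonoidAlgebra.mapDomainLinearMap K K (fun d => chainOfExp (segreExp d) d.degree) p ∈
      Ideal.span (segreQuadrics ι K) := by
  induction p using MvPolynomial.induction_on' with
  | monomial d c =>
    rw [← single_eq_monomial, AddMonoidAlgebra.mapDomainLinearMap_single, single_eq_monomial,
      single_eq_monomial, ← mul_one c, ← smul_eq_mul, ← smul_monomial, ← smul_monomial, ← smul_sub]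
    exact Submodule.smul_of_tower_mem _ c (monomial_sub_monomial_chainOfExp_mem_span K d)
  | add p q hp hq =>
    rw [map_add, add_sub_add_comm]
    exact Ideal.add_mem _ hp hq

theorem ker_segreMap [Nonempty ι] :
    RingHom.ker (segreMap ι K) = Ideal.span (segreQuadrics ι K) := by
  refine le_antisymm (fun p hp => ?_) (Ideal.span_le.2 ?_)
  · obtain ⟨i₀⟩ := ‹Nonempty ι›
    -- `d.degree` can be read off `segreExp d` at any coordinate, so the reduction factors
    -- through the Segre map.
    have hfactor : (fun d => chainOfExp (segreExp d) d.degree) =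
        (fun E => chainOfExp E (E (i₀, true) + E (i₀, false))) ∘ segreExp := by
      funext d
      rw [Function.comp_apply, segreExp_apply_true_add_apply_false]
    have hreduce :
        AddMonoidAlgebra.mapDomainLinearMap K K (fun d => chainOfExp (segreExp d) d.degree) p =
          0 := by
      rw [hfactor, AddMonoidAlgebra.mapDomainLinearMap_comp, LinearMap.comp_apply,
        ← segreMap_eq_mapDomain, RingHom.mem_ker.1 hp, map_zero]
    simpa [hreduce] using sub_mapDomain_chainOfExp_mem_span K p
  · rintro _ ⟨u, v, rfl⟩
    rw [SetLike.mem_coe, RingHom.mem_ker, map_sub, X_mul_X_eq_monomial, X_mul_X_eq_monomial,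
      segreMap_monomial, segreMap_monomial, map_add, map_add, segreExp_inter_add_union, sub_self]

end Segre

open Segre

def p4Edge : Fin 3 → Sym2 (Fin 4) := ![s(0, 1), s(1, 2), s(2, 3)]

lemma p4Edge_injective : Function.Injective p4Edge := by decide

lemma P4_edgeFinset : (Set.toFinite P4.edgeSet).toFinset = Finset.univ.image p4Edge := by
  ext e
  induction e using Sym2.ind with
  | _ a b =>
    simp only [Set.Finite.mem_toFinset, SimpleGraph.mem_edgeSet, P4, SimpleGraph.fromEdgeSet_adj,
      Set.mem_insert_iff, Set.mem_singleton_iff, Finset.mem_image, Finset.mem_univ, true_and]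
    revert a b
    decide

def cutEdges (v₀ : Fin 4) (A : {A : Finset (Fin 4) // v₀ ∈ A}) : Finset (Fin 3) :=
  Finset.univ.filter fun i => sep A.1 (p4Edge i)

lemma cutEdges_bijective (v₀ : Fin 4) : Function.Bijective (cutEdges v₀) := by
  revert v₀
  decide

lemma cutMap_P4_eq (K : Type) [Field K] (v₀ : Fin 4) :
    cutMap K P4 v₀ = (rename fun p : Fin 3 × Bool => (p4Edge p.1, p.2)).comp
      ((segreMap (Fin 3) K).comp (rename (cutEdges v₀))) := by
  refine MvPolynomial.algHom_ext fun A => ?_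
  simp only [cutMap, segreMap, aeval_X, AlgHom.comp_apply, rename_X, map_prod, P4_edgeFinset,
    Finset.prod_image fun i _ j _ h => p4Edge_injective h]
  simp [cutEdges]

lemma cutIdeal_P4_eq (K : Type) [Field K] (v₀ : Fin 4) :
    cutIdeal K P4 v₀ = Ideal.span
      (rename (Equiv.ofBijective _ (cutEdges_bijective v₀)).symm '' segreQuadrics (Fin 3) K) := by
  have hinj : Function.Injective (rename fun p : Fin 3 × Bool => (p4Edge p.1, p.2) :
      MvPolynomial (Fin 3 × Bool) K →ₐ[K] _) :=
    rename_injective _ fun p q h => Prod.ext (p4Edge_injective (Prod.ext_iff.1 h).1)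
      (Prod.ext_iff.1 h).2
  rw [← comap_rename_span, ← ker_segreMap]
  ext p
  simp only [cutIdeal, Ideal.mem_comap, RingHom.mem_ker, cutMap_P4_eq, AlgHom.comp_apply,
    map_eq_zero_iff _ hinj]
  rfl

/-- The cut ideal of the path graph `P₄` is generated by polynomials of degree at
most `2`. -/
theorem cutIdeal_P4_quadrics (K : Type) [Field K] (v₀ : Fin 4) :
    ∃ S : Set (MvPolynomial {A : Finset (Fin 4) // v₀ ∈ A} K),
      Ideal.span S = cutIdeal K P4 v₀ ∧ ∀ p ∈ S, p.totalDegree ≤ 2 := by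
  refine ⟨_, (cutIdeal_P4_eq K v₀).symm, ?_⟩
  rintro _ ⟨q, hq, rfl⟩
  exact ((isHomogeneous_of_mem_segreQuadrics hq).rename_isHomogeneous).totalDegree_le

end
end
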